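/- arXiv:2211.02478 — 2 statements merged into one kernel-verified Lean document; each statement's English description precedes it below -/
import Mathlib

section
/- Let f : ℝ^n → ℝ be a function whose gradient satisfies ‖∇f(x)‖ ≤ 1 for all x, and let μ be a probability measure on ℝ^n satisfying a logarithmic Sobolev inequality with constant σ², i.e. Ent_μ(g²) ≤ 2σ² E_μ[‖∇g‖²] for all smooth g. Then for every t ∈ ℝ, ∫ exp(t(f - E_μ[f])) dμ ≤ exp(σ² t² / 2). -/
open MeasureTheory Real Set Filter Topology InnerProductSpace
open scoped ENNReal NNReal

noncomputable def herbstT (u : ℝ) : ℝ := (exp u - exp (-u)) / (exp u + exp (-u))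

lemma herbstT_den_pos (u : ℝ) : 0 < exp u + exp (-u) := by positivity

lemma herbstT_den_ge (u : ℝ) : 2 ≤ exp u + exp (-u) := by
  nlinarith [sq_nonneg (exp u - 1), Real.exp_pos u, Real.exp_neg u,
    mul_pos (Real.exp_pos u) (Real.exp_pos (-u)),
    (by rw [← Real.exp_add]; simp : exp u * exp (-u) = 1)]

lemma herbstT_contDiff : ContDiff ℝ (⊤ : ℕ∞) herbstT :=
  ((Real.contDiff_exp).sub ((contDiff_neg).exp)).div
    ((Real.contDiff_exp).add ((contDiff_neg).exp)) (fun x => (herbstT_den_pos x).ne')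

lemma herbstT_hasDerivAt (u : ℝ) :
    HasDerivAt herbstT (4 / (exp u + exp (-u))^2) u := by
  have h1 : HasDerivAt (fun u : ℝ => exp u - exp (-u)) (exp u + exp (-u)) u := by
    have := (Real.hasDerivAt_exp u).sub ((Real.hasDerivAt_exp (-u)).comp u (hasDerivAt_neg u))
    exact this.congr_deriv (by ring)
  have h2 : HasDerivAt (fun u : ℝ => exp u + exp (-u)) (exp u - exp (-u)) u := by
    have := (Real.hasDerivAt_exp u).add ((Real.hasDerivAt_exp (-u)).comp u (hasDerivAt_neg u))
    exact this.congr_deriv (by ring)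
  have h3 := h1.div h2 (herbstT_den_pos u).ne'
  refine h3.congr_deriv ?_
  have hne := (herbstT_den_pos u).ne'
  rw [eq_div_iff (pow_ne_zero 2 hne), div_mul_cancel₀ _ (pow_ne_zero 2 hne)]
  ring_nf
  nlinarith [Real.exp_neg u, Real.exp_ne_zero u,
    mul_comm (exp u) (exp (-u)),
    (by rw [← Real.exp_add]; simp : exp u * exp (-u) = 1)]

lemma herbstT_deriv_mem (u : ℝ) : 0 < 4 / (exp u + exp (-u))^2 ∧ 4 / (exp u + exp (-u))^2 ≤ 1 := by
  have h := herbstT_den_ge u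
  have hp := herbstT_den_pos u
  constructor
  · positivity
  · rw [div_le_one (by positivity)]; nlinarith

lemma herbstT_abs_le_one (u : ℝ) : |herbstT u| ≤ 1 := by
  rw [herbstT, abs_div, abs_of_pos (herbstT_den_pos u), div_le_one (herbstT_den_pos u)]
  cases abs_cases (exp u - exp (-u)) with
  | inl h => rw [h.1]; linarith [Real.exp_pos (-u)]
  | inr h => rw [h.1]; linarith [Real.exp_pos u]

lemma herbstT_zero : herbstT 0 = 0 := by simp [herbstT]

lemma herbstT_abs_le_abs (u : ℝ) : |herbstT u| ≤ |u| := by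
  have hlip : LipschitzWith 1 herbstT := by
    apply lipschitzWith_of_nnnorm_deriv_le (fun x => (herbstT_hasDerivAt x).differentiableAt)
    intro x
    rw [(herbstT_hasDerivAt x).deriv]
    rw [← NNReal.coe_le_coe, coe_nnnorm, Real.norm_eq_abs, NNReal.coe_one,
      abs_of_pos (herbstT_deriv_mem x).1]
    exact (herbstT_deriv_mem x).2
  have := hlip.dist_le_mul u 0
  simpa [herbstT_zero, Real.dist_eq] using this

lemma herbstT_tendsto_slope : Tendsto (fun v => herbstT v / v) (𝓝[≠] (0:ℝ)) (𝓝 1) := by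
  have h := hasDerivAt_iff_tendsto_slope.mp (herbstT_hasDerivAt 0)
  simp only [Real.exp_zero] at h
  norm_num at h
  refine h.congr (fun v => ?_)
  simp [slope, herbstT_zero, div_eq_inv_mul]

noncomputable def herbstChi (k : ℕ) (u : ℝ) : ℝ := (k+1) * herbstT (u/(k+1))

lemma herbstChi_contDiff (k : ℕ) : ContDiff ℝ (⊤ : ℕ∞) (herbstChi k) :=
  contDiff_const.mul (herbstT_contDiff.comp (contDiff_id.div_const _))

lemma herbstChi_hasDerivAt (k : ℕ) (u : ℝ) :
    HasDerivAt (herbstChi k) (4 / (exp (u/(k+1)) + exp (-(u/(k+1))))^2) u := by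
  have hk : ((k:ℝ)+1) ≠ 0 := by positivity
  have h1 : HasDerivAt (fun u : ℝ => u / (k+1)) (1/(k+1)) u := by
    simpa using (hasDerivAt_id u).div_const ((k:ℝ)+1)
  have h2 := ((herbstT_hasDerivAt (u/(k+1))).comp u h1).const_mul ((k:ℝ)+1)
  refine h2.congr_deriv ?_
  field_simp

lemma herbstChi_deriv (k : ℕ) (u : ℝ) :
    deriv (herbstChi k) u = 4 / (exp (u/(k+1)) + exp (-(u/(k+1))))^2 :=
  (herbstChi_hasDerivAt k u).deriv

lemma herbstChi_deriv_abs_le (k : ℕ) (u : ℝ) : |deriv (herbstChi k) u| ≤ 1 := by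
  rw [herbstChi_deriv, abs_of_pos (herbstT_deriv_mem (u/(k+1))).1]
  exact (herbstT_deriv_mem (u/(k+1))).2

lemma herbstChi_abs_le_abs (k : ℕ) (u : ℝ) : |herbstChi k u| ≤ |u| := by
  have hk : (0:ℝ) < (k:ℝ)+1 := by positivity
  rw [herbstChi, abs_mul, abs_of_pos hk]
  calc ((k:ℝ)+1) * |herbstT (u/(k+1))| ≤ ((k:ℝ)+1) * |u/(k+1)| :=
        mul_le_mul_of_nonneg_left (herbstT_abs_le_abs _) hk.le
    _ = |u| := by rw [abs_div, abs_of_pos hk]; field_simp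

lemma herbstChi_abs_le_const (k : ℕ) (u : ℝ) : |herbstChi k u| ≤ (k:ℝ)+1 := by
  have hk : (0:ℝ) < (k:ℝ)+1 := by positivity
  rw [herbstChi, abs_mul, abs_of_pos hk]
  calc ((k:ℝ)+1) * |herbstT (u/(k+1))| ≤ ((k:ℝ)+1) * 1 :=
        mul_le_mul_of_nonneg_left (herbstT_abs_le_one _) hk.le
    _ = (k:ℝ)+1 := mul_one _

lemma herbstChi_tendsto (u : ℝ) :
    Tendsto (fun k : ℕ => herbstChi k u) atTop (𝓝 u) := by
  rcases eq_or_ne u 0 with rfl | hu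
  · simp only [herbstChi, zero_div, herbstT_zero, mul_zero]
    exact tendsto_const_nhds
  · have h1 : Tendsto (fun k : ℕ => u / ((k:ℝ)+1)) atTop (𝓝[≠] 0) := by
      rw [tendsto_nhdsWithin_iff]
      constructor
      · exact Tendsto.div_atTop tendsto_const_nhds
          (tendsto_natCast_atTop_atTop.atTop_add tendsto_const_nhds)
      · filter_upwards with k
        have : ((k:ℝ)+1) ≠ 0 := by positivity
        simp [div_eq_zero_iff, hu, this]
    have h2 := herbstT_tendsto_slope.comp h1
    have h3 : Tendsto (fun k : ℕ => u * (herbstT (u/((k:ℝ)+1)) / (u/((k:ℝ)+1)))) atTop (𝓝 (u * 1)) :=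
      (tendsto_const_nhds).mul h2
    rw [mul_one] at h3
    refine h3.congr (fun k => ?_)
    have hk : ((k:ℝ)+1) ≠ 0 := by positivity
    rw [herbstChi]
    field_simp

lemma herbst_int_bdd {n : ℕ} (μ : Measure (EuclideanSpace ℝ (Fin n))) [IsProbabilityMeasure μ]
    (g : EuclideanSpace ℝ (Fin n) → ℝ) (C : ℝ) (hg : Continuous g) (hgC : ∀ x, |g x| ≤ C) :
    Integrable g μ :=
  (integrable_const C).mono' hg.aestronglyMeasurable
    (ae_of_all _ (fun x => by simpa using hgC x))

-- chain rule for gradient (from t3)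
lemma gradient_comp_real {E : Type*} [NormedAddCommGroup E] [InnerProductSpace ℝ E]
    [CompleteSpace E] (f : E → ℝ) (χ : ℝ → ℝ) (x : E)
    (hf : DifferentiableAt ℝ f x) (hχ : DifferentiableAt ℝ χ (f x)) :
    gradient (fun y => χ (f y)) x = deriv χ (f x) • gradient f x := by
  have hcomp : fderiv ℝ (fun y => χ (f y)) x = (fderiv ℝ χ (f x)).comp (fderiv ℝ f x) :=
    fderiv_comp x hχ hf
  have hlin : (fderiv ℝ χ (f x)).comp (fderiv ℝ f x) = deriv χ (f x) • (fderiv ℝ f x) := by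
    ext v
    simp only [ContinuousLinearMap.comp_apply, ContinuousLinearMap.smul_apply, smul_eq_mul]
    have h : fderiv ℝ χ (f x) ((fderiv ℝ f x) v)
        = ((fderiv ℝ f x) v) • (fderiv ℝ χ (f x) 1) := by
      rw [← _root_.map_smul]; norm_num
    rw [h, deriv]; ring_nf
  rw [gradient, hcomp, hlin, _root_.map_smul, gradient]

lemma norm_gradient_comp_real {E : Type*} [NormedAddCommGroup E] [InnerProductSpace ℝ E]
    [CompleteSpace E] (f : E → ℝ) (χ : ℝ → ℝ) (x : E)
    (hf : DifferentiableAt ℝ f x) (hχ : DifferentiableAt ℝ χ (f x)) :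
    ‖gradient (fun y => χ (f y)) x‖ = |deriv χ (f x)| * ‖gradient f x‖ := by
  rw [gradient_comp_real f χ x hf hχ, norm_smul, Real.norm_eq_abs]

lemma continuous_gradient_of_contDiff {E : Type*} [NormedAddCommGroup E]
    [InnerProductSpace ℝ E] [CompleteSpace E] (f : E → ℝ) (hf : ContDiff ℝ (⊤ : ℕ∞) f) :
    Continuous (gradient f) :=
  (LinearIsometryEquiv.continuous _).comp (hf.continuous_fderiv (by simp))

lemma herbst_core_pos {n : ℕ} (μ : Measure (EuclideanSpace ℝ (Fin n))) [IsProbabilityMeasure μ]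
    (σ2 : ℝ) (hσ : 0 ≤ σ2)
    (hLSI : ∀ g : EuclideanSpace ℝ (Fin n) → ℝ, ContDiff ℝ (⊤ : ℕ∞) g →
      (∫ x, (g x)^2 * Real.log ((g x)^2) ∂μ)
        - (∫ x, (g x)^2 ∂μ) * Real.log (∫ x, (g x)^2 ∂μ)
      ≤ 2 * σ2 * ∫ x, ‖gradient g x‖^2 ∂μ)
    (f : EuclideanSpace ℝ (Fin n) → ℝ) (hf : ContDiff ℝ (⊤ : ℕ∞) f)
    (hgrad : ∀ x, ‖gradient f x‖ ≤ 1)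
    (B : ℝ) (hB : ∀ x, |f x| ≤ B) {t : ℝ} (ht : 0 < t) :
    ∫ x, Real.exp (t * f x) ∂μ ≤ Real.exp (t * (∫ x, f x ∂μ) + σ2 * t^2 / 2) := by
  have hfc : Continuous f := hf.continuous
  set H : ℝ → ℝ := fun s => ∫ x, Real.exp (s * f x) ∂μ with hHdef
  set D : ℝ → ℝ := fun s => ∫ x, f x * Real.exp (s * f x) ∂μ with hDdef
  set m : ℝ := ∫ x, f x ∂μ with hmdef
  have hexp_bdd : ∀ (s : ℝ) (x : EuclideanSpace ℝ (Fin n)),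
      Real.exp (s * f x) ≤ Real.exp (|s| * B) := by
    intro s x
    apply Real.exp_le_exp.mpr
    calc s * f x ≤ |s * f x| := le_abs_self _
      _ = |s| * |f x| := abs_mul _ _
      _ ≤ |s| * B := mul_le_mul_of_nonneg_left (hB x) (abs_nonneg s)
  have hint : ∀ s : ℝ, Integrable (fun x => Real.exp (s * f x)) μ := fun s =>
    herbst_int_bdd μ _ (Real.exp (|s| * B)) (continuous_const.mul hfc).rexp
      (fun x => by rw [abs_of_pos (Real.exp_pos _)]; exact hexp_bdd s x)
  have hintD : ∀ s : ℝ, Integrable (fun x => f x * Real.exp (s * f x)) μ := fun s =>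
    herbst_int_bdd μ _ (B * Real.exp (|s| * B)) (hfc.mul (continuous_const.mul hfc).rexp)
      (fun x => by
        rw [abs_mul, abs_of_pos (Real.exp_pos _)]
        exact mul_le_mul (hB x) (hexp_bdd s x) (Real.exp_pos _).le
          ((abs_nonneg _).trans (hB x)))
  -- derivative of H
  have hHd : ∀ s : ℝ, HasDerivAt H (D s) s := by
    intro s
    have key := hasDerivAt_integral_of_dominated_loc_of_deriv_le
      (F := fun u x => Real.exp (u * f x)) (F' := fun u x => f x * Real.exp (u * f x))
      (x₀ := s) (s := Metric.ball s 1) (bound := fun _ => B * Real.exp ((|s| + 1) * B))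
      (μ := μ) (Metric.ball_mem_nhds s one_pos)
      (Eventually.of_forall (fun u => ((continuous_const.mul hfc).rexp).aestronglyMeasurable))
      (hint s) ((hintD s).aestronglyMeasurable)
      (ae_of_all _ (fun x u hu => ?_)) (integrable_const _)
      (ae_of_all _ (fun x u hu => ?_))
    · exact key.2
    · -- bound
      have hu' : |u| ≤ |s| + 1 := by
        have := mem_ball_iff_norm.mp hu
        rw [Real.norm_eq_abs] at this
        calc |u| = |s + (u - s)| := by ring_nf
          _ ≤ |s| + |u - s| := abs_add_le _ _
          _ ≤ |s| + 1 := by linarith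
      rw [Real.norm_eq_abs, abs_mul, abs_of_pos (Real.exp_pos _)]
      have h1 : Real.exp (u * f x) ≤ Real.exp ((|s| + 1) * B) := by
        apply Real.exp_le_exp.mpr
        calc u * f x ≤ |u| * |f x| := by
              calc u * f x ≤ |u * f x| := le_abs_self _
                _ = |u| * |f x| := abs_mul _ _
          _ ≤ (|s| + 1) * B :=
              mul_le_mul hu' (hB x) (abs_nonneg _) (by positivity)
      exact mul_le_mul (hB x) h1 (Real.exp_pos _).le ((abs_nonneg _).trans (hB x))
    · -- differentiability in u
      have h1 : HasDerivAt (fun u : ℝ => u * f x) (f x) u := hasDerivAt_mul_const (f x)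
      have h2 := h1.exp
      exact h2.congr_deriv (by ring)
  -- positivity of H
  have hHpos : ∀ s : ℝ, 0 < H s := by
    intro s
    have h1 : ∀ x, Real.exp (-(|s| * B)) ≤ Real.exp (s * f x) := by
      intro x
      apply Real.exp_le_exp.mpr
      have : |s * f x| ≤ |s| * B := by
        rw [abs_mul]; exact mul_le_mul_of_nonneg_left (hB x) (abs_nonneg s)
      linarith [neg_abs_le (s * f x)]
    have h2 : ∫ x, Real.exp (-(|s| * B)) ∂μ ≤ H s :=
      integral_mono (integrable_const _) (hint s) h1
    have h3 : ∫ x, Real.exp (-(|s| * B)) ∂μ = Real.exp (-(|s| * B)) := by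
      simp [measure_univ]
    calc (0:ℝ) < Real.exp (-(|s| * B)) := Real.exp_pos _
      _ = ∫ x, Real.exp (-(|s| * B)) ∂μ := h3.symm
      _ ≤ H s := h2
  -- the log-Sobolev step
  have key : ∀ s : ℝ, s * D s - H s * Real.log (H s) ≤ σ2 * s^2 / 2 * H s := by
    intro s
    set g : EuclideanSpace ℝ (Fin n) → ℝ := fun x => Real.exp (s/2 * f x) with hgdef
    have hg : ContDiff ℝ (⊤ : ℕ∞) g := (contDiff_const.mul hf).exp
    have hgsq : ∀ x, (g x)^2 = Real.exp (s * f x) := by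
      intro x
      show Real.exp (s/2 * f x) ^ 2 = _
      rw [sq, ← Real.exp_add]
      ring_nf
    have hloggsq : ∀ x, Real.log ((g x)^2) = s * f x := by
      intro x; rw [hgsq x, Real.log_exp]
    have hLSIg := hLSI g hg
    have e1 : ∫ x, (g x)^2 * Real.log ((g x)^2) ∂μ = s * D s := by
      rw [show s * D s = ∫ x, s * (f x * Real.exp (s * f x)) ∂μ from
        (integral_const_mul s _).symm]
      apply MeasureTheory.integral_congr_ae
      filter_upwards with x
      rw [hloggsq x, hgsq x]; ring
    have e2 : ∫ x, (g x)^2 ∂μ = H s := by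
      apply MeasureTheory.integral_congr_ae
      filter_upwards with x
      rw [hgsq x]
    rw [e1, e2] at hLSIg
    -- bound the gradient term
    have hgradg : ∀ x, ‖gradient g x‖^2 ≤ s^2/4 * Real.exp (s * f x) := by
      intro x
      have hdiff_f : DifferentiableAt ℝ f x := hf.differentiable (by simp) x
      have hchi : HasDerivAt (fun u : ℝ => Real.exp (s/2 * u)) (Real.exp (s/2 * f x) * (s/2))
          (f x) := by
        have h1 : HasDerivAt (fun u : ℝ => s/2 * u) (s/2) (f x) := by
          simpa using (hasDerivAt_id (f x)).const_mul (s/2)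
        exact h1.exp
      have hn := norm_gradient_comp_real f (fun u => Real.exp (s/2 * u)) x hdiff_f
        hchi.differentiableAt
      rw [hchi.deriv] at hn
      have : ‖gradient g x‖ = |Real.exp (s/2 * f x) * (s/2)| * ‖gradient f x‖ := hn
      rw [this]
      have habs : |Real.exp (s/2 * f x) * (s/2)| ≤ Real.exp (s/2 * f x) * (|s|/2) := by
        rw [abs_mul, abs_of_pos (Real.exp_pos _), abs_div]
        simp
      calc (|Real.exp (s/2 * f x) * (s/2)| * ‖gradient f x‖)^2
          ≤ (Real.exp (s/2 * f x) * (|s|/2) * 1)^2 := by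
            apply pow_le_pow_left₀ (by positivity)
            exact mul_le_mul habs (hgrad x) (norm_nonneg _)
              (by positivity)
        _ = s^2/4 * Real.exp (s * f x) := by
            have h : Real.exp (s/2 * f x) ^ 2 = Real.exp (s * f x) := by
              rw [sq, ← Real.exp_add]; ring_nf
            rw [mul_one, mul_pow, h, div_pow, sq_abs]
            ring
    have hgradint : Integrable (fun x => ‖gradient g x‖^2) μ := by
      apply herbst_int_bdd μ _ (s^2/4 * Real.exp (|s| * B))
      · exact ((continuous_gradient_of_contDiff g hg).norm.pow 2)
      · intro x
        rw [abs_of_nonneg (by positivity)]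
        exact (hgradg x).trans (by
          apply mul_le_mul_of_nonneg_left (hexp_bdd s x) (by positivity))
    have hgradint2 : ∫ x, ‖gradient g x‖^2 ∂μ ≤ s^2/4 * H s := by
      have h : ∫ x, s^2/4 * Real.exp (s * f x) ∂μ = s^2/4 * H s := by
        rw [show (s^2/4) * H s = s^2/4 * ∫ x, Real.exp (s * f x) ∂μ from rfl,
          integral_const_mul]
      rw [← h]
      exact integral_mono hgradint ((hint s).const_mul _) hgradg
    have : 2 * σ2 * ∫ x, ‖gradient g x‖^2 ∂μ ≤ σ2 * s^2 / 2 * H s := by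
      calc 2 * σ2 * ∫ x, ‖gradient g x‖^2 ∂μ ≤ 2 * σ2 * (s^2/4 * H s) :=
            mul_le_mul_of_nonneg_left hgradint2 (by positivity)
        _ = σ2 * s^2 / 2 * H s := by ring
    linarith
  -- the ODE argument
  set L : ℝ → ℝ := fun s => Real.log (H s) with hLdef
  have hLd : ∀ s : ℝ, HasDerivAt L (D s / H s) s := fun s => (hHd s).log (hHpos s).ne'
  have hH0 : H 0 = 1 := by
    rw [hHdef]; simp [measure_univ]
  have hL0 : L 0 = 0 := by show Real.log (H 0) = 0; rw [hH0, Real.log_one]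
  have hD0 : D 0 = m := by
    rw [hDdef, hmdef]; simp
  set φ : ℝ → ℝ := fun s => (if s = 0 then m else L s / s) - σ2/2 * s with hφdef
  have hφ0 : φ 0 = m := by simp [hφdef]
  have hφcont : ContinuousOn φ (Icc 0 t) := by
    intro s hs
    rcases eq_or_ne s 0 with rfl | hs0
    · -- continuity at 0
      rw [← continuousWithinAt_diff_self]
      have hslope := hasDerivAt_iff_tendsto_slope.mp (hLd 0)
      rw [hD0, hH0, div_one] at hslope
      have hmono : 𝓝[Icc 0 t \ {0}] (0:ℝ) ≤ 𝓝[≠] (0:ℝ) :=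
        nhdsWithin_mono _ (fun x hx => hx.2)
      have h1 : Tendsto (fun u => slope L 0 u - σ2/2 * u) (𝓝[Icc 0 t \ {0}] 0)
          (𝓝 (m - σ2/2 * 0)) :=
        Tendsto.sub (hslope.mono_left hmono)
          ((continuous_const.mul continuous_id).continuousAt.tendsto.mono_left
            nhdsWithin_le_nhds)
      rw [mul_zero, sub_zero] at h1
      have h2 : ∀ u ∈ Icc 0 t \ {(0:ℝ)}, φ u = slope L 0 u - σ2/2 * u := by
        intro u hu
        have hu0 : u ≠ 0 := hu.2
        rw [hφdef]
        simp only [hu0, if_false]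
        rw [slope_def_field, hL0]
        ring_nf
      unfold ContinuousWithinAt
      rw [hφ0]
      exact Tendsto.congr' (eventually_nhdsWithin_of_forall (fun u hu => (h2 u hu).symm)) h1
    · -- continuity at s ≠ 0
      apply ContinuousAt.continuousWithinAt
      have hEq : (fun u => L u / u - σ2/2 * u) =ᶠ[𝓝 s] φ := by
        filter_upwards [isOpen_ne.mem_nhds hs0] with u hu
        rw [hφdef]; simp only [hu, if_false]
      apply ContinuousAt.congr _ hEq
      exact ((((hLd s).differentiableAt.continuousAt).div continuousAt_id hs0).sub
        ((continuous_const.mul continuous_id).continuousAt))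
  have hφderiv : ∀ s ∈ interior (Icc 0 t), HasDerivAt φ
      ((D s / H s * s - L s) / s^2 - σ2/2) s := by
    intro s hs
    rw [interior_Icc] at hs
    have hs0 : s ≠ 0 := ne_of_gt hs.1
    have h1 : HasDerivAt (fun u => L u / u) ((D s / H s * s - L s * 1) / s^2) s :=
      (hLd s).div (hasDerivAt_id s) hs0
    have h2 : HasDerivAt (fun u => L u / u - σ2/2 * u)
        ((D s / H s * s - L s * 1) / s^2 - σ2/2 * 1) s :=
      h1.sub (by simpa using (hasDerivAt_id s).const_mul (σ2/2))
    have hEq : (fun u => L u / u - σ2/2 * u) =ᶠ[𝓝 s] φ := by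
      filter_upwards [isOpen_ne.mem_nhds hs0] with u hu
      rw [hφdef]; simp only [hu, if_false]
    have h3 := h2.congr_of_eventuallyEq hEq.symm
    exact h3.congr_deriv (by ring)
  have hφanti : AntitoneOn φ (Icc 0 t) := by
    apply antitoneOn_of_deriv_nonpos (convex_Icc 0 t) hφcont
    · intro s hs
      exact ((hφderiv s hs).differentiableAt).differentiableWithinAt
    · intro s hs
      rw [(hφderiv s hs).deriv]
      rw [interior_Icc] at hs
      have hs0 : 0 < s := hs.1
      have hkey := key s
      have hHs := hHpos s
      rw [sub_nonpos, div_le_iff₀ (by positivity : (0:ℝ) < s^2)]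
      rw [div_mul_eq_mul_div, sub_le_iff_le_add, div_le_iff₀ hHs]
      nlinarith
  have hle : φ t ≤ φ 0 :=
    hφanti (left_mem_Icc.mpr ht.le) (right_mem_Icc.mpr ht.le) ht.le
  rw [hφ0, hφdef] at hle
  simp only [ne_of_gt ht, if_false] at hle
  have hLt : L t ≤ t * m + σ2 * t^2 / 2 := by
    have h1 : L t / t ≤ m + σ2/2 * t := by linarith
    calc L t = (L t / t) * t := by field_simp
      _ ≤ (m + σ2/2 * t) * t := mul_le_mul_of_nonneg_right h1 ht.le
      _ = t * m + σ2 * t^2 / 2 := by ring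
  calc H t = Real.exp (L t) := (Real.exp_log (hHpos t)).symm
    _ ≤ Real.exp (t * m + σ2 * t^2 / 2) := Real.exp_le_exp.mpr hLt

lemma gradient_neg_norm {E : Type*} [NormedAddCommGroup E] [InnerProductSpace ℝ E]
    [CompleteSpace E] (f : E → ℝ) (x : E) (hf : DifferentiableAt ℝ f x) :
    ‖gradient (fun y => -f y) x‖ = ‖gradient f x‖ := by
  have h := norm_gradient_comp_real f (fun u => -u) x hf differentiable_neg.differentiableAt
  simp only [deriv_neg, abs_neg, abs_one, one_mul] at h
  exact h

lemma herbst_core_mgf {n : ℕ} (μ : Measure (EuclideanSpace ℝ (Fin n))) [IsProbabilityMeasure μ]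
    (σ2 : ℝ) (hσ : 0 ≤ σ2)
    (hLSI : ∀ g : EuclideanSpace ℝ (Fin n) → ℝ, ContDiff ℝ (⊤ : ℕ∞) g →
      (∫ x, (g x)^2 * Real.log ((g x)^2) ∂μ)
        - (∫ x, (g x)^2 ∂μ) * Real.log (∫ x, (g x)^2 ∂μ)
      ≤ 2 * σ2 * ∫ x, ‖gradient g x‖^2 ∂μ)
    (f : EuclideanSpace ℝ (Fin n) → ℝ) (hf : ContDiff ℝ (⊤ : ℕ∞) f)
    (hgrad : ∀ x, ‖gradient f x‖ ≤ 1)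
    (B : ℝ) (hB : ∀ x, |f x| ≤ B) (t : ℝ) :
    ∫ x, Real.exp (t * f x) ∂μ ≤ Real.exp (t * (∫ x, f x ∂μ) + σ2 * t^2 / 2) := by
  rcases lt_trichotomy t 0 with htneg | rfl | htpos
  · have hgrad' : ∀ x, ‖gradient (fun y => -f y) x‖ ≤ 1 := by
      intro x
      rw [gradient_neg_norm f x (hf.differentiable (by simp) x)]
      exact hgrad x
    have hB' : ∀ x, |(fun y => -f y) x| ≤ B := fun x => by simpa using hB x
    have h := herbst_core_pos μ σ2 hσ hLSI (fun y => -f y) hf.neg hgrad' B hB'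
      (t := -t) (by linarith)
    have e1 : ∫ x, Real.exp (-t * -f x) ∂μ = ∫ x, Real.exp (t * f x) ∂μ := by
      apply MeasureTheory.integral_congr_ae; filter_upwards with x; ring_nf
    have e2 : ∫ x, -f x ∂μ = -(∫ x, f x ∂μ) := integral_neg f
    rw [e1, e2] at h
    convert h using 2
    ring
  · simp
  · exact herbst_core_pos μ σ2 hσ hLSI f hf hgrad B hB htpos

lemma herbst_core {n : ℕ} (μ : Measure (EuclideanSpace ℝ (Fin n))) [IsProbabilityMeasure μ]
    (σ2 : ℝ) (hσ : 0 ≤ σ2)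
    (hLSI : ∀ g : EuclideanSpace ℝ (Fin n) → ℝ, ContDiff ℝ (⊤ : ℕ∞) g →
      (∫ x, (g x)^2 * Real.log ((g x)^2) ∂μ)
        - (∫ x, (g x)^2 ∂μ) * Real.log (∫ x, (g x)^2 ∂μ)
      ≤ 2 * σ2 * ∫ x, ‖gradient g x‖^2 ∂μ)
    (f : EuclideanSpace ℝ (Fin n) → ℝ) (hf : ContDiff ℝ (⊤ : ℕ∞) f)
    (hgrad : ∀ x, ‖gradient f x‖ ≤ 1)
    (B : ℝ) (hB : ∀ x, |f x| ≤ B) (t : ℝ) :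
    ∫ x, Real.exp (t * (f x - ∫ y, f y ∂μ)) ∂μ ≤ Real.exp (σ2 * t^2 / 2) := by
  set m : ℝ := ∫ y, f y ∂μ
  have e1 : ∫ x, Real.exp (t * (f x - m)) ∂μ
      = (∫ x, Real.exp (t * f x) ∂μ) / Real.exp (t * m) := by
    rw [← MeasureTheory.integral_div]
    apply MeasureTheory.integral_congr_ae; filter_upwards with x
    rw [← Real.exp_sub]
    ring_nf
  rw [e1, div_le_iff₀ (Real.exp_pos _), ← Real.exp_add]
  calc ∫ x, Real.exp (t * f x) ∂μ ≤ Real.exp (t * m + σ2 * t^2 / 2) :=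
        herbst_core_mgf μ σ2 hσ hLSI f hf hgrad B hB t
    _ = Real.exp (σ2 * t ^ 2 / 2 + t * m) := by ring_nf

section Main
variable {n : ℕ}

theorem herbst_subgaussian_of_logSobolev'
    (n : ℕ) (μ : Measure (EuclideanSpace ℝ (Fin n))) [IsProbabilityMeasure μ]
    (σ2 : ℝ) (hσ : 0 ≤ σ2)
    (hLSI : ∀ g : EuclideanSpace ℝ (Fin n) → ℝ, ContDiff ℝ (⊤ : ℕ∞) g →
      (∫ x, (g x)^2 * Real.log ((g x)^2) ∂μ)
        - (∫ x, (g x)^2 ∂μ) * Real.log (∫ x, (g x)^2 ∂μ)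
      ≤ 2 * σ2 * ∫ x, ‖gradient g x‖^2 ∂μ)
    (f : EuclideanSpace ℝ (Fin n) → ℝ) (hf : ContDiff ℝ (⊤ : ℕ∞) f)
    (hgrad : ∀ x, ‖gradient f x‖ ≤ 1) :
    ∀ t : ℝ, ∫ x, Real.exp (t * (f x - ∫ y, f y ∂μ)) ∂μ ≤ Real.exp (σ2 * t^2 / 2) := by
  intro t
  have hfc : Continuous f := hf.continuous
  set F : ℕ → EuclideanSpace ℝ (Fin n) → ℝ := fun k x => herbstChi k (f x) with hFdef
  have hFcd : ∀ k, ContDiff ℝ (⊤ : ℕ∞) (F k) := fun k => (herbstChi_contDiff k).comp hf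
  have hFc : ∀ k, Continuous (F k) := fun k => (hFcd k).continuous
  have hFgrad : ∀ k x, ‖gradient (F k) x‖ ≤ 1 := by
    intro k x
    have h := norm_gradient_comp_real f (herbstChi k) x (hf.differentiable (by simp) x)
      (((herbstChi_contDiff k).differentiable (by simp)) _)
    calc ‖gradient (F k) x‖ = |deriv (herbstChi k) (f x)| * ‖gradient f x‖ := h
      _ ≤ 1 * 1 := mul_le_mul (herbstChi_deriv_abs_le k (f x)) (hgrad x)
            (norm_nonneg _) zero_le_one
      _ = 1 := mul_one 1
  have hFbdd : ∀ k x, |F k x| ≤ (k:ℝ)+1 := fun k x => herbstChi_abs_le_const k (f x)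
  have hFle : ∀ k x, |F k x| ≤ |f x| := fun k x => herbstChi_abs_le_abs k (f x)
  have hFtendsto : ∀ x, Tendsto (fun k => F k x) atTop (𝓝 (f x)) :=
    fun x => herbstChi_tendsto (f x)
  set mk : ℕ → ℝ := fun k => ∫ x, F k x ∂μ with hmkdef
  have hcore : ∀ (k : ℕ) (s : ℝ),
      ∫ x, Real.exp (s * (F k x - mk k)) ∂μ ≤ Real.exp (σ2 * s^2 / 2) :=
    fun k s => herbst_core μ σ2 hσ hLSI (F k) (hFcd k) (hFgrad k) ((k:ℝ)+1) (hFbdd k) s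
  have hmgf : ∀ (k : ℕ) (s : ℝ),
      ∫ x, Real.exp (s * F k x) ∂μ ≤ Real.exp (s * mk k + σ2 * s^2 / 2) :=
    fun k s => herbst_core_mgf μ σ2 hσ hLSI (F k) (hFcd k) (hFgrad k) ((k:ℝ)+1) (hFbdd k) s
  have hintF : ∀ (k : ℕ) (s : ℝ), Integrable (fun x => Real.exp (s * F k x)) μ := by
    intro k s
    apply herbst_int_bdd μ _ (Real.exp (|s| * ((k:ℝ)+1))) (continuous_const.mul (hFc k)).rexp
    intro x
    rw [abs_of_pos (Real.exp_pos _)]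
    apply Real.exp_le_exp.mpr
    calc s * F k x ≤ |s * F k x| := le_abs_self _
      _ = |s| * |F k x| := abs_mul _ _
      _ ≤ |s| * ((k:ℝ)+1) := mul_le_mul_of_nonneg_left (hFbdd k x) (abs_nonneg _)
  have hintFsub : ∀ (k : ℕ) (s : ℝ),
      Integrable (fun x => Real.exp (s * (F k x - mk k))) μ := by
    intro k s
    have h : (fun x => Real.exp (s * (F k x - mk k)))
        = fun x => Real.exp (s * F k x) * Real.exp (-(s * mk k)) := by
      funext x; rw [← Real.exp_add]; ring_nf
    rw [h]
    exact (hintF k s).mul_const _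
  -- tail of f
  obtain ⟨a, ha0, hatail⟩ : ∃ a : ℝ, 0 ≤ a ∧ μ {x | a < |f x|} ≤ ENNReal.ofReal (1/4) := by
    have hmeas : ∀ j : ℕ, NullMeasurableSet {x : EuclideanSpace ℝ (Fin n) | (j:ℝ) < |f x|} μ :=
      fun j => (measurableSet_lt measurable_const hfc.abs.measurable).nullMeasurableSet
    have hanti : Antitone (fun j : ℕ => {x : EuclideanSpace ℝ (Fin n) | (j:ℝ) < |f x|}) := by
      intro i j hij x hx
      simp only [Set.mem_setOf_eq] at hx ⊢
      exact lt_of_le_of_lt (show (i:ℝ) ≤ (j:ℝ) from Nat.cast_le.mpr hij) hx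
    have hempty : ⋂ j : ℕ, {x : EuclideanSpace ℝ (Fin n) | (j:ℝ) < |f x|} = ∅ := by
      ext x
      simp only [Set.mem_iInter, Set.mem_setOf_eq, Set.mem_empty_iff_false, iff_false, not_forall,
        not_lt]
      obtain ⟨j, hj⟩ := exists_nat_gt |f x|
      exact ⟨j, hj.le⟩
    have htend := tendsto_measure_iInter_atTop hmeas hanti ⟨0, measure_ne_top μ _⟩
    rw [hempty, measure_empty] at htend
    have hev := htend.eventually_lt_const (show (0:ℝ≥0∞) < ENNReal.ofReal (1/4) by
      simp [ENNReal.ofReal_pos])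
    obtain ⟨j, hj⟩ := hev.exists
    exact ⟨j, Nat.cast_nonneg j, hj.le⟩
  set r : ℝ := σ2/2 + Real.log 8 with hrdef
  have hr : 0 < r := by
    have := Real.log_pos (show (1:ℝ) < 8 by norm_num)
    simp only [hrdef]; linarith
  have hbnd : Real.exp (σ2/2) / Real.exp r = 1/8 := by
    rw [← Real.exp_sub]
    have : σ2/2 - r = -Real.log 8 := by rw [hrdef]; ring
    rw [this, Real.exp_neg, Real.exp_log (by norm_num : (0:ℝ) < 8)]
    norm_num
  have htail : ∀ (k : ℕ) (c : ℝ), (∫ x, Real.exp (c * (F k x - mk k)) ∂μ ≤ Real.exp (σ2/2)) →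
      μ {x | r ≤ c * (F k x - mk k)} ≤ ENNReal.ofReal (1/8) := by
    intro k c hc
    have hnn : 0 ≤ᵐ[μ] fun x => Real.exp (c * (F k x - mk k)) :=
      ae_of_all _ fun x => (Real.exp_pos _).le
    have h1 := mul_meas_ge_le_integral_of_nonneg hnn (hintFsub k c) (Real.exp r)
    have hseteq : {x | Real.exp r ≤ Real.exp (c * (F k x - mk k))}
        = {x | r ≤ c * (F k x - mk k)} := by
      ext x; exact Real.exp_le_exp
    rw [hseteq] at h1
    have h2 : (μ {x | r ≤ c * (F k x - mk k)}).toReal ≤ 1/8 := by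
      rw [← hbnd]
      rw [le_div_iff₀ (Real.exp_pos r)]
      calc (μ {x | r ≤ c * (F k x - mk k)}).toReal * Real.exp r
          = Real.exp r * (μ {x | r ≤ c * (F k x - mk k)}).toReal := mul_comm _ _
        _ ≤ ∫ x, Real.exp (c * (F k x - mk k)) ∂μ := h1
        _ ≤ Real.exp (σ2/2) := hc
    exact (ENNReal.le_ofReal_iff_toReal_le (measure_ne_top μ _) (by norm_num)).mpr h2
  have hexp_half : ∀ (k : ℕ) (c : ℝ), c = 1 ∨ c = -1 →
      ∫ x, Real.exp (c * (F k x - mk k)) ∂μ ≤ Real.exp (σ2/2) := by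
    intro k c hc
    have h := hcore k c
    have hcs : σ2 * c^2 / 2 = σ2/2 := by rcases hc with rfl | rfl <;> ring
    rwa [hcs] at h
  -- uniform bound on the means
  set M : ℝ := a + r with hMdef
  have hM : ∀ k : ℕ, |mk k| ≤ M := by
    intro k
    set S₁ : Set (EuclideanSpace ℝ (Fin n)) := {x | a < |f x|}
    set S₂ : Set (EuclideanSpace ℝ (Fin n)) := {x | r ≤ 1 * (F k x - mk k)}
    set S₃ : Set (EuclideanSpace ℝ (Fin n)) := {x | r ≤ (-1) * (F k x - mk k)}
    have hu : μ (S₁ ∪ S₂ ∪ S₃) < 1 := by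
      calc μ (S₁ ∪ S₂ ∪ S₃) ≤ μ S₁ + μ S₂ + μ S₃ := by
            calc μ (S₁ ∪ S₂ ∪ S₃) ≤ μ (S₁ ∪ S₂) + μ S₃ := measure_union_le _ _
              _ ≤ μ S₁ + μ S₂ + μ S₃ := by
                  gcongr
                  exact measure_union_le _ _
        _ ≤ ENNReal.ofReal (1/4) + ENNReal.ofReal (1/8) + ENNReal.ofReal (1/8) :=
            add_le_add (add_le_add hatail (htail k 1 (hexp_half k 1 (Or.inl rfl))))
              (htail k (-1) (hexp_half k (-1) (Or.inr rfl)))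
        _ = ENNReal.ofReal (1/2) := by
            rw [← ENNReal.ofReal_add (by norm_num) (by norm_num),
              ← ENNReal.ofReal_add (by norm_num) (by norm_num)]
            norm_num
        _ < 1 := by
            rw [show (1:ℝ≥0∞) = ENNReal.ofReal 1 by simp]
            exact ENNReal.ofReal_lt_ofReal_iff_of_nonneg (by norm_num) |>.mpr (by norm_num)
    have hne : S₁ ∪ S₂ ∪ S₃ ≠ Set.univ := by
      intro h
      rw [h, measure_univ] at hu
      exact lt_irrefl _ hu
    obtain ⟨x, hx⟩ := Set.ne_univ_iff_exists_notMem _ |>.mp hne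
    simp only [Set.mem_union, not_or, Set.mem_setOf_eq, S₁, S₂, S₃, not_le, not_lt] at hx
    obtain ⟨⟨hx1, hx2⟩, hx3⟩ := hx
    have hFx : |F k x| ≤ a := (hFle k x).trans hx1
    have habs : |F k x - mk k| < r := by
      rw [abs_lt]
      constructor
      · nlinarith
      · nlinarith
    have : |mk k| ≤ |F k x - mk k| + |F k x| := by
      calc |mk k| = |(mk k - F k x) + F k x| := by ring_nf
        _ ≤ |mk k - F k x| + |F k x| := abs_add_le _ _
        _ = |F k x - mk k| + |F k x| := by rw [abs_sub_comm]
    rw [hMdef]; linarith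
  -- integrability of exp (s * f) for |s| ≤ 1
  have hIexp : ∀ s : ℝ, |s| ≤ 1 → Integrable (fun x => Real.exp (s * f x)) μ := by
    intro s hs
    have hmeasf : AEStronglyMeasurable (fun x => Real.exp (s * f x)) μ :=
      ((continuous_const.mul hfc).rexp).aestronglyMeasurable
    refine ⟨hmeasf, (hasFiniteIntegral_iff_ofReal
      (ae_of_all _ fun x => (Real.exp_pos _).le)).mpr ?_⟩
    have hlim : ∀ x, Tendsto (fun k => ENNReal.ofReal (Real.exp (s * F k x))) atTop
        (𝓝 (ENNReal.ofReal (Real.exp (s * f x)))) := by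
      intro x
      exact (ENNReal.continuous_ofReal.tendsto _).comp
        ((Real.continuous_exp.tendsto _).comp (tendsto_const_nhds.mul (hFtendsto x)))
    have hbd : ∀ k : ℕ, ∫⁻ x, ENNReal.ofReal (Real.exp (s * F k x)) ∂μ
        ≤ ENNReal.ofReal (Real.exp (M + σ2/2)) := by
      intro k
      rw [← ofReal_integral_eq_lintegral_ofReal (hintF k s)
        (ae_of_all _ fun x => (Real.exp_pos _).le)]
      apply ENNReal.ofReal_le_ofReal
      calc ∫ x, Real.exp (s * F k x) ∂μ ≤ Real.exp (s * mk k + σ2 * s^2/2) := hmgf k s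
        _ ≤ Real.exp (M + σ2/2) := by
            apply Real.exp_le_exp.mpr
            have h1 : s * mk k ≤ M := by
              calc s * mk k ≤ |s * mk k| := le_abs_self _
                _ = |s| * |mk k| := abs_mul _ _
                _ ≤ 1 * M := mul_le_mul hs (hM k) (abs_nonneg _) zero_le_one
                _ = M := one_mul M
            have hs2 : s^2 ≤ 1 := by
              rw [← sq_abs]
              nlinarith [abs_nonneg s]
            have h2 : σ2 * s^2/2 ≤ σ2/2 := by nlinarith
            linarith
    calc ∫⁻ x, ENNReal.ofReal (Real.exp (s * f x)) ∂μ
        = ∫⁻ x, liminf (fun k => ENNReal.ofReal (Real.exp (s * F k x))) atTop ∂μ := by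
          apply lintegral_congr
          intro x
          exact ((hlim x).liminf_eq).symm
      _ ≤ liminf (fun k => ∫⁻ x, ENNReal.ofReal (Real.exp (s * F k x)) ∂μ) atTop :=
          lintegral_liminf_le (fun k =>
            ENNReal.measurable_ofReal.comp (continuous_const.mul (hFc k)).rexp.measurable)
      _ ≤ liminf (fun _ : ℕ => ENNReal.ofReal (Real.exp (M + σ2/2))) atTop :=
          liminf_le_liminf (Eventually.of_forall hbd)
      _ = ENNReal.ofReal (Real.exp (M + σ2/2)) := liminf_const _
      _ < ⊤ := ENNReal.ofReal_lt_top
  have hintf : Integrable f μ := by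
    have h1 := hIexp 1 (by norm_num)
    have h2 := hIexp (-1) (by norm_num)
    refine (h1.add h2).mono' hfc.aestronglyMeasurable (ae_of_all _ fun x => ?_)
    show ‖f x‖ ≤ Real.exp (1 * f x) + Real.exp ((-1) * f x)
    rw [Real.norm_eq_abs]
    have hexp : Real.exp |f x| ≤ Real.exp (1 * f x) + Real.exp ((-1) * f x) := by
      have e1 : (1:ℝ) * f x = f x := one_mul _
      rw [e1]
      rcases abs_cases (f x) with ⟨h, _⟩ | ⟨h, _⟩ <;> rw [h]
      · exact le_add_of_nonneg_right (Real.exp_pos _).le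
      · have e2 : -f x = (-1) * f x := by ring
        rw [e2]
        exact le_add_of_nonneg_left (Real.exp_pos _).le
    linarith [Real.add_one_le_exp |f x|]
  -- convergence of means
  have hmk_tendsto : Tendsto mk atTop (𝓝 (∫ y, f y ∂μ)) := by
    apply tendsto_integral_of_dominated_convergence (fun x => |f x|)
      (fun k => (hFc k).aestronglyMeasurable) hintf.abs
    · intro k
      exact ae_of_all _ fun x => by rw [Real.norm_eq_abs]; exact hFle k x
    · exact ae_of_all _ hFtendsto
  -- final Fatou step
  set m : ℝ := ∫ y, f y ∂μ with hmdef
  have hnn : 0 ≤ᵐ[μ] fun x => Real.exp (t * (f x - m)) :=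
    ae_of_all _ fun x => (Real.exp_pos _).le
  rw [integral_eq_lintegral_of_nonneg_ae hnn
    ((continuous_const.mul (hfc.sub continuous_const)).rexp).aestronglyMeasurable]
  apply ENNReal.toReal_le_of_le_ofReal (Real.exp_pos _).le
  have hlim : ∀ x, Tendsto (fun k => ENNReal.ofReal (Real.exp (t * (F k x - mk k)))) atTop
      (𝓝 (ENNReal.ofReal (Real.exp (t * (f x - m))))) := by
    intro x
    have h1 : Tendsto (fun k => t * (F k x - mk k)) atTop (𝓝 (t * (f x - m))) :=
      tendsto_const_nhds.mul ((hFtendsto x).sub hmk_tendsto)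
    exact (ENNReal.continuous_ofReal.tendsto _).comp ((Real.continuous_exp.tendsto _).comp h1)
  calc ∫⁻ x, ENNReal.ofReal (Real.exp (t * (f x - m))) ∂μ
      = ∫⁻ x, liminf (fun k => ENNReal.ofReal (Real.exp (t * (F k x - mk k)))) atTop ∂μ := by
        apply lintegral_congr
        intro x
        exact ((hlim x).liminf_eq).symm
    _ ≤ liminf (fun k => ∫⁻ x, ENNReal.ofReal (Real.exp (t * (F k x - mk k))) ∂μ) atTop :=
        lintegral_liminf_le (fun k =>
          ENNReal.measurable_ofReal.comp
            (continuous_const.mul ((hFc k).sub continuous_const)).rexp.measurable)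
    _ ≤ liminf (fun _ : ℕ => ENNReal.ofReal (Real.exp (σ2 * t^2 / 2))) atTop := by
        have hb : ∀ k : ℕ, ∫⁻ x, ENNReal.ofReal (Real.exp (t * (F k x - mk k))) ∂μ
            ≤ ENNReal.ofReal (Real.exp (σ2 * t^2 / 2)) := by
          intro k
          rw [← ofReal_integral_eq_lintegral_ofReal (hintFsub k t)
            (ae_of_all _ fun x => (Real.exp_pos _).le)]
          exact ENNReal.ofReal_le_ofReal (hcore k t)
        exact liminf_le_liminf (Eventually.of_forall hb)
    _ = ENNReal.ofReal (Real.exp (σ2 * t^2 / 2)) := liminf_const _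
end Main

/-- Herbst argument: a log-Sobolev inequality with constant `σ²` implies
sub-Gaussian concentration of functions with gradient bounded by 1. -/
theorem herbst_subgaussian_of_logSobolev
    (n : ℕ) (μ : Measure (EuclideanSpace ℝ (Fin n))) [IsProbabilityMeasure μ]
    (σ2 : ℝ) (hσ : 0 ≤ σ2)
    (hLSI : ∀ g : EuclideanSpace ℝ (Fin n) → ℝ, ContDiff ℝ (⊤ : ℕ∞) g →
      (∫ x, (g x)^2 * Real.log ((g x)^2) ∂μ)
        - (∫ x, (g x)^2 ∂μ) * Real.log (∫ x, (g x)^2 ∂μ)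
      ≤ 2 * σ2 * ∫ x, ‖gradient g x‖^2 ∂μ)
    (f : EuclideanSpace ℝ (Fin n) → ℝ) (hf : ContDiff ℝ (⊤ : ℕ∞) f)
    (hgrad : ∀ x, ‖gradient f x‖ ≤ 1) :
    ∀ t : ℝ, ∫ x, Real.exp (t * (f x - ∫ y, f y ∂μ)) ∂μ ≤ Real.exp (σ2 * t^2 / 2) := by
  exact herbst_subgaussian_of_logSobolev' n μ σ2 hσ hLSI f hf hgrad
end

section
/- Fix h, δ > 0, Gaussian kernel K_h, and stabilized kernel regression T_D as above with loss L(a,y) = |a − y|. For i.i.d. data D = (Z₁,…,Zₙ), Zᵢ = (Xᵢ,Yᵢ), with E|Y₁| < ∞ and an independent copy Z = (X,Y), one has |E[L(T_{D_{(−i)}}(Xᵢ), Yᵢ)] − E[L(T_D(X), Y)]| ≤ C/√n for a constant C depending on h, δ, and E|Y₁|. -/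
/-!
Exchangeability of the i.i.d. sample lets us swap the `i`-th training point with the test
point, so the leave-one-out risk equals the risk of `T_{D₍₋ᵢ₎}` at an independent `(X, Y)`.
It remains to compare `T_{D₍₋ᵢ₎}(X)` with `T_D(X)`, i.e. to add a single point: as the kernel
weights lie in `(0, 1]` and the denominator is at least `nδ`, this moves the estimate by at most
`(∑ⱼ |Yⱼ|)/(nδ)² + |Yᵢ|/(nδ)`, whose expectation is `O(E|Y| / n)`.
-/

open MeasureTheory Finset Real

section WeightedRatio

variable {ι : Type*} {s : Finset ι} {w y : ι → ℝ} {N : ℝ}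

lemma abs_sum_mul_le_sum_abs (hw0 : ∀ j ∈ s, 0 ≤ w j) (hw1 : ∀ j ∈ s, w j ≤ 1) :
    |∑ j ∈ s, w j * y j| ≤ ∑ j ∈ s, |y j| :=
  (abs_sum_le_sum_abs _ _).trans <| sum_le_sum fun j hj => by
    rw [abs_mul, abs_of_nonneg (hw0 j hj)]
    exact mul_le_of_le_one_left (abs_nonneg _) (hw1 j hj)

lemma abs_sum_mul_div_sum_add_le (hw0 : ∀ j ∈ s, 0 ≤ w j) (hw1 : ∀ j ∈ s, w j ≤ 1)
    (hN : 0 < N) :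
    |(∑ j ∈ s, w j * y j) / ((∑ j ∈ s, w j) + N)| ≤ (∑ j ∈ s, |y j|) / N := by
  have hb : 0 ≤ ∑ j ∈ s, w j := sum_nonneg hw0
  rw [abs_div, abs_of_pos (a := (∑ j ∈ s, w j) + N) (by linarith)]
  exact div_le_div₀ (sum_nonneg fun j _ => abs_nonneg _) (abs_sum_mul_le_sum_abs hw0 hw1) hN
    (le_add_of_nonneg_left hb)

lemma abs_add_mul_div_add_sub_div_le {a b k y : ℝ} (hN : 0 < N) (hb : 0 ≤ b) (hk0 : 0 ≤ k)
    (hk1 : k ≤ 1) :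
    |(a + k * y) / (b + k + N) - a / (b + N)| ≤ |a| / N ^ 2 + |y| / N := by
  have hbN : 0 < b + N := by positivity
  have hbkN : 0 < b + k + N := by positivity
  have hsplit : (a + k * y) / (b + k + N) - a / (b + N)
      = k * y / (b + k + N) - k * a / ((b + N) * (b + k + N)) := by
    field_simp; ring
  rw [hsplit, add_comm (|a| / N ^ 2)]
  refine (abs_sub _ _).trans (add_le_add ?_ ?_)
  · rw [abs_div, abs_mul, abs_of_nonneg hk0, abs_of_pos hbkN]
    calc k * |y| / (b + k + N) ≤ 1 * |y| / N := by gcongr; linarith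
      _ = |y| / N := by rw [one_mul]
  · rw [abs_div, abs_mul, abs_of_nonneg hk0, abs_of_pos (mul_pos hbN hbkN)]
    calc k * |a| / ((b + N) * (b + k + N)) ≤ 1 * |a| / (N * N) := by
          gcongr <;> linarith
      _ = |a| / N ^ 2 := by ring

lemma abs_sum_insert_mul_div_sub_le [DecidableEq ι] {i : ι} (hi : i ∉ s)
    (hw0 : ∀ j ∈ insert i s, 0 ≤ w j) (hw1 : ∀ j ∈ insert i s, w j ≤ 1) (hN : 0 < N) :
    |(∑ j ∈ insert i s, w j * y j) / ((∑ j ∈ insert i s, w j) + N)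
        - (∑ j ∈ s, w j * y j) / ((∑ j ∈ s, w j) + N)|
      ≤ (∑ j ∈ s, |y j|) / N ^ 2 + |y i| / N := by
  have hs0 : ∀ j ∈ s, 0 ≤ w j := fun j hj => hw0 j (mem_insert_of_mem hj)
  have hs1 : ∀ j ∈ s, w j ≤ 1 := fun j hj => hw1 j (mem_insert_of_mem hj)
  rw [sum_insert hi, sum_insert hi, add_comm (w i * y i), add_comm (w i)]
  refine (abs_add_mul_div_add_sub_div_le hN (sum_nonneg hs0) (hw0 i (mem_insert_self i s))
    (hw1 i (mem_insert_self i s))).trans ?_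
  gcongr
  exact abs_sum_mul_le_sum_abs hs0 hs1

end WeightedRatio

lemma integral_pi_comp_perm {ι α E : Type*} [Fintype ι] [MeasurableSpace α]
    [NormedAddCommGroup E] [NormedSpace ℝ E] (μ : Measure α) [SigmaFinite μ]
    (e : Equiv.Perm ι) (f : (ι → α) → E) :
    ∫ z, f (fun j => z (e j)) ∂Measure.pi (fun _ => μ) = ∫ z, f z ∂Measure.pi (fun _ => μ) :=
  (measurePreserving_arrowCongr' (fun _ => μ) (fun _ => μ) e.symm (MeasurableEquiv.refl α)
    fun _ => MeasurePreserving.id μ).integral_comp' f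

lemma integral_comp_iIndepFun_eq_integral_pi {Ω ι β : Type*} [MeasurableSpace Ω] [Fintype ι]
    [MeasurableSpace β] {P : Measure Ω} [IsProbabilityMeasure P] {μ : Measure β}
    {Z : ι → Ω → β} (hZ : ∀ j, Measurable (Z j)) (hind : ProbabilityTheory.iIndepFun Z P)
    (hlaw : ∀ j, P.map (Z j) = μ) {g : (ι → β) → ℝ}
    (hg : AEStronglyMeasurable g (Measure.pi fun _ => μ)) :
    ∫ ω, g (fun j => Z j ω) ∂P = ∫ z, g z ∂Measure.pi (fun _ => μ) := by
  have hmap : P.map (fun ω j => Z j ω) = Measure.pi fun _ => μ := by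
    rw [(ProbabilityTheory.iIndepFun_iff_map_fun_eq_pi_map fun j => (hZ j).aemeasurable).mp hind]
    simp only [hlaw]
  rw [← hmap] at hg ⊢
  exact (integral_map (measurable_pi_lambda _ hZ).aemeasurable hg).symm

noncomputable def gaussianKernel (h x x' : ℝ) : ℝ := exp (-(x - x') ^ 2 / (2 * h ^ 2))

lemma gaussianKernel_pos (h x x' : ℝ) : 0 < gaussianKernel h x x' := exp_pos _

lemma gaussianKernel_le_one (h x x' : ℝ) : gaussianKernel h x x' ≤ 1 :=
  exp_le_one_iff.mpr <| div_nonpos_of_nonpos_of_nonneg (neg_nonpos.mpr (sq_nonneg _))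
    (by positivity)

@[fun_prop]
lemma measurable_gaussianKernel (h : ℝ) :
    Measurable fun q : ℝ × ℝ => gaussianKernel h q.1 q.2 := by
  unfold gaussianKernel; fun_prop

/-- The estimate `T_D(x)` built from the points `D j`, `j ∈ s`; the paper's `nδ` is `N`. -/
noncomputable def stabilizedKernelRegression (h N : ℝ) {ι : Type*} (s : Finset ι)
    (D : ι → ℝ × ℝ) (x : ℝ) : ℝ :=
  (∑ j ∈ s, gaussianKernel h x (D j).1 * (D j).2) / ((∑ j ∈ s, gaussianKernel h x (D j).1) + N)

noncomputable def absPredictionError (h N : ℝ) {ι : Type*} (s : Finset ι) (D : ι → ℝ × ℝ)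
    (p : ℝ × ℝ) : ℝ :=
  |stabilizedKernelRegression h N s D p.1 - p.2|

section KernelRegression

variable {h N : ℝ} {ι : Type*} {s : Finset ι} {D : ι → ℝ × ℝ}

lemma measurable_absPredictionError {X : Type*} [MeasurableSpace X] {f : X → ι → ℝ × ℝ}
    {g : X → ℝ × ℝ} (hf : Measurable f) (hg : Measurable g) :
    Measurable fun x => absPredictionError h N s (f x) (g x) := by
  unfold absPredictionError stabilizedKernelRegression
  fun_prop

lemma absPredictionError_nonneg {p : ℝ × ℝ} : 0 ≤ absPredictionError h N s D p := abs_nonneg _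

lemma absPredictionError_le (hN : 0 < N) (p : ℝ × ℝ) :
    absPredictionError h N s D p ≤ (∑ j ∈ s, |(D j).2|) / N + |p.2| :=
  (abs_sub _ _).trans <| add_le_add_left (abs_sum_mul_div_sum_add_le
    (fun _ _ => (gaussianKernel_pos h _ _).le) (fun _ _ => gaussianKernel_le_one h _ _) hN) _

lemma abs_absPredictionError_insert_sub_le [DecidableEq ι] {i : ι} (hi : i ∉ s) (hN : 0 < N)
    (p : ℝ × ℝ) :
    |absPredictionError h N (insert i s) D p - absPredictionError h N s D p|
      ≤ (∑ j ∈ s, |(D j).2|) / N ^ 2 + |(D i).2| / N := by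
  refine (abs_abs_sub_abs_le_abs_sub _ _).trans ?_
  rw [sub_sub_sub_cancel_right]
  exact abs_sum_insert_mul_div_sub_le hi (fun _ _ => (gaussianKernel_pos h _ _).le)
    (fun _ _ => gaussianKernel_le_one h _ _) hN

lemma absPredictionError_congr {D' : ι → ℝ × ℝ} (hD : ∀ j ∈ s, D j = D' j) (p : ℝ × ℝ) :
    absPredictionError h N s D p = absPredictionError h N s D' p := by
  unfold absPredictionError stabilizedKernelRegression
  simp +contextual only [hD]

end KernelRegression

section IID

variable {n : ℕ} {μ : Measure (ℝ × ℝ)} [IsProbabilityMeasure μ] {h N : ℝ}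

lemma integrable_abs_snd_eval (hY : Integrable (fun p : ℝ × ℝ => |p.2|) μ) (c : Fin (n + 1)) :
    Integrable (fun z : Fin (n + 1) → ℝ × ℝ => |(z c).2|) (Measure.pi fun _ => μ) :=
  integrable_comp_eval (μ := fun _ : Fin (n + 1) => μ) (f := fun p : ℝ × ℝ => |p.2|) hY

lemma integral_abs_snd_eval (c : Fin (n + 1)) :
    ∫ z : Fin (n + 1) → ℝ × ℝ, |(z c).2| ∂Measure.pi (fun _ => μ) = ∫ p, |p.2| ∂μ :=
  integral_comp_eval (μ := fun _ : Fin (n + 1) => μ) (f := fun p : ℝ × ℝ => |p.2|)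
    (by fun_prop)

lemma measurable_absPredictionError_init (s : Finset (Fin n)) (t : Fin (n + 1)) :
    Measurable fun z : Fin (n + 1) → ℝ × ℝ => absPredictionError h N s (Fin.init z) (z t) :=
  measurable_absPredictionError (measurable_pi_lambda _ fun _ => measurable_pi_apply _)
    (measurable_pi_apply t)

lemma integrable_absPredictionError_init (hY : Integrable (fun p : ℝ × ℝ => |p.2|) μ)
    (hN : 0 < N) (s : Finset (Fin n)) (t : Fin (n + 1)) :
    Integrable (fun z => absPredictionError h N s (Fin.init z) (z t))
      (Measure.pi fun _ => μ) := by
  refine Integrable.mono' (((integrable_finsetSum s fun j _ =>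
      integrable_abs_snd_eval hY j.castSucc).div_const N).add (integrable_abs_snd_eval hY t))
    ?_ (.of_forall fun z => ?_)
  · exact (measurable_absPredictionError_init s t).aestronglyMeasurable
  · rw [norm_of_nonneg absPredictionError_nonneg]
    exact absPredictionError_le hN (z t)

lemma integral_absPredictionError_loo_eq_test (i : Fin n) :
    ∫ z, absPredictionError h N (univ.erase i) (Fin.init z) (z i.castSucc) ∂Measure.pi (fun _ => μ)
      = ∫ z, absPredictionError h N (univ.erase i) (Fin.init z) (z (Fin.last n))
          ∂Measure.pi (fun _ => μ) := by
  rw [← integral_pi_comp_perm μ (Equiv.swap i.castSucc (Fin.last n))]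
  refine integral_congr_ae (.of_forall fun z => ?_)
  simp only [Equiv.swap_apply_left]
  refine absPredictionError_congr (fun j hj => ?_) _
  simp only [Fin.init]
  rw [Equiv.swap_apply_of_ne_of_ne ((Fin.castSucc_injective n).ne (ne_of_mem_erase hj))
    (Fin.castSucc_lt_last j).ne]

lemma abs_integral_loo_sub_integral_test_le (hY : Integrable (fun p : ℝ × ℝ => |p.2|) μ)
    (hN : 0 < N) (i : Fin n) :
    |∫ z, absPredictionError h N (univ.erase i) (Fin.init z) (z i.castSucc)
        ∂Measure.pi (fun _ => μ)
      - ∫ z, absPredictionError h N univ (Fin.init z) (z (Fin.last n)) ∂Measure.pi (fun _ => μ)|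
      ≤ n * (∫ p, |p.2| ∂μ) / N ^ 2 + (∫ p, |p.2| ∂μ) / N := by
  set M := ∫ p, |p.2| ∂μ
  have hbound : Integrable (fun z : Fin (n + 1) → ℝ × ℝ =>
      (∑ j ∈ univ.erase i, |(z j.castSucc).2|) / N ^ 2 + |(z i.castSucc).2| / N)
      (Measure.pi fun _ => μ) :=
    ((integrable_finsetSum _ fun j _ => integrable_abs_snd_eval hY j.castSucc).div_const _).add
      ((integrable_abs_snd_eval hY i.castSucc).div_const _)
  rw [integral_absPredictionError_loo_eq_test, ← integral_sub
    (integrable_absPredictionError_init hY hN _ _) (integrable_absPredictionError_init hY hN _ _)]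
  calc _ ≤ ∫ z, |absPredictionError h N (univ.erase i) (Fin.init z) (z (Fin.last n))
          - absPredictionError h N univ (Fin.init z) (z (Fin.last n))|
          ∂Measure.pi (fun _ => μ) := abs_integral_le_integral_abs
    _ ≤ ∫ z, ((∑ j ∈ univ.erase i, |(z j.castSucc).2|) / N ^ 2 + |(z i.castSucc).2| / N)
          ∂Measure.pi (fun _ => μ) := by
      refine integral_mono ((integrable_absPredictionError_init hY hN _ _).sub
        (integrable_absPredictionError_init hY hN _ _)).abs hbound fun z => ?_
      have hstep := abs_absPredictionError_insert_sub_le (h := h) (D := Fin.init z)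
        (notMem_erase i univ) hN (z (Fin.last n))
      rwa [insert_erase (mem_univ i), abs_sub_comm] at hstep
    _ = #(univ.erase i) * M / N ^ 2 + M / N := by
      rw [integral_add ((integrable_finsetSum _ fun j _ =>
          integrable_abs_snd_eval hY j.castSucc).div_const _)
          ((integrable_abs_snd_eval hY i.castSucc).div_const _),
        integral_div, integral_div, integral_finsetSum _ fun j _ =>
          integrable_abs_snd_eval hY j.castSucc]
      simp only [integral_abs_snd_eval, sum_const, nsmul_eq_mul, M]
    _ ≤ n * M / N ^ 2 + M / N := by
      gcongr
      exact_mod_cast card_erase_le.trans_eq (card_fin n)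

end IID

theorem stabilized_kernel_regression_loo_bias_general
    (h δ : ℝ) (hδ : 0 < δ)
    (μpair : Measure (ℝ × ℝ)) [IsProbabilityMeasure μpair]
    (hY : Integrable (fun p : ℝ × ℝ => |p.2|) μpair) :
    ∃ C > 0, ∀ (n : ℕ), 1 ≤ n →
      ∀ (Ω : Type) (_ : MeasurableSpace Ω) (P : Measure Ω), IsProbabilityMeasure P →
      ∀ (Z : Fin (n + 1) → Ω → ℝ × ℝ),
        (∀ j, Measurable (Z j)) →
        ProbabilityTheory.iIndepFun Z P →
        (∀ j, Measure.map (Z j) P = μpair) →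
        ∀ i : Fin n,
        |(∫ ω, |(∑ j ∈ Finset.univ.erase i,
              Real.exp (-(((Z i.castSucc ω).1 - (Z j.castSucc ω).1)^2) / (2 * h^2))
                * (Z j.castSucc ω).2) /
            ((∑ j ∈ Finset.univ.erase i,
              Real.exp (-(((Z i.castSucc ω).1 - (Z j.castSucc ω).1)^2) / (2 * h^2)))
              + n * δ)
            - (Z i.castSucc ω).2| ∂P)
          - (∫ ω, |(∑ j : Fin n,
              Real.exp (-(((Z (Fin.last n) ω).1 - (Z j.castSucc ω).1)^2) / (2 * h^2))
                * (Z j.castSucc ω).2) /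
            ((∑ j : Fin n,
              Real.exp (-(((Z (Fin.last n) ω).1 - (Z j.castSucc ω).1)^2) / (2 * h^2)))
              + n * δ)
            - (Z (Fin.last n) ω).2| ∂P)|
          ≤ C / Real.sqrt n := by
  set M := ∫ p, |p.2| ∂μpair
  refine ⟨M / δ ^ 2 + M / δ + 1, by positivity, fun n hn Ω _ P _ Z hZ hind hlaw i => ?_⟩
  have hn' : (1 : ℝ) ≤ n := by exact_mod_cast hn
  have hN : 0 < (n : ℝ) * δ := by positivity
  have hloo := integral_comp_iIndepFun_eq_integral_pi hZ hind hlaw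
    (measurable_absPredictionError_init (h := h) (N := n * δ) (univ.erase i)
      i.castSucc).aestronglyMeasurable
  have htest := integral_comp_iIndepFun_eq_integral_pi hZ hind hlaw
    (measurable_absPredictionError_init (h := h) (N := n * δ) univ
      (Fin.last n)).aestronglyMeasurable
  calc _ = |∫ z, absPredictionError h (n * δ) (univ.erase i) (Fin.init z) (z i.castSucc)
          ∂Measure.pi (fun _ => μpair)
        - ∫ z, absPredictionError h (n * δ) univ (Fin.init z) (z (Fin.last n))
          ∂Measure.pi (fun _ => μpair)| := by rw [← hloo, ← htest]; rfl
    _ ≤ n * M / (n * δ) ^ 2 + M / (n * δ) := abs_integral_loo_sub_integral_test_le hY hN i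
    _ = (M / δ ^ 2 + M / δ) / n := by field_simp
    _ ≤ (M / δ ^ 2 + M / δ + 1) / √n :=
      div_le_div₀ (by positivity) (by linarith) (by positivity)
        (sqrt_le_self_iff.mpr (Or.inr hn'))

/-- The leave-one-out bias of stabilized kernel regression with absolute loss is `O(1/√n)`:
`|E[L(T_{D₍₋ᵢ₎}(Xᵢ),Yᵢ)] − E[L(T_D(X),Y)]| ≤ C/√n`. -/
theorem stabilized_kernel_regression_loo_bias
    (h δ : ℝ) (hh : 0 < h) (hδ : 0 < δ)
    (μpair : Measure (ℝ × ℝ)) [IsProbabilityMeasure μpair]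
    (hY : Integrable (fun p : ℝ × ℝ => |p.2|) μpair) :
    ∃ C > 0, ∀ (n : ℕ), 1 ≤ n →
      ∀ (Ω : Type) (_ : MeasurableSpace Ω) (P : Measure Ω), IsProbabilityMeasure P →
      ∀ (Z : Fin (n + 1) → Ω → ℝ × ℝ),
        (∀ j, Measurable (Z j)) →
        ProbabilityTheory.iIndepFun Z P →
        (∀ j, Measure.map (Z j) P = μpair) →
        ∀ i : Fin n,
        |(∫ ω, |(∑ j ∈ Finset.univ.erase i,
              Real.exp (-(((Z i.castSucc ω).1 - (Z j.castSucc ω).1)^2) / (2 * h^2))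
                * (Z j.castSucc ω).2) /
            ((∑ j ∈ Finset.univ.erase i,
              Real.exp (-(((Z i.castSucc ω).1 - (Z j.castSucc ω).1)^2) / (2 * h^2)))
              + n * δ)
            - (Z i.castSucc ω).2| ∂P)
          - (∫ ω, |(∑ j : Fin n,
              Real.exp (-(((Z (Fin.last n) ω).1 - (Z j.castSucc ω).1)^2) / (2 * h^2))
                * (Z j.castSucc ω).2) /
            ((∑ j : Fin n,
              Real.exp (-(((Z (Fin.last n) ω).1 - (Z j.castSucc ω).1)^2) / (2 * h^2)))
              + n * δ)
            - (Z (Fin.last n) ω).2| ∂P)|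
          ≤ C / Real.sqrt n :=
  stabilized_kernel_regression_loo_bias_general h δ hδ μpair hY
end
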